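/- arXiv:2603.30009 — 4 statements merged into one kernel-verified Lean document; each statement's English description precedes it below -/
import Mathlib

section
/- If a simple graph G with p vertices and q ≥ 1 edges admits an additively graceful labeling, then q ≥ 2p − 4. -/
open Finset

/-- Edge label for a negative (or ordinary) edge: sum of endpoint labels. -/
def negLabel (f : ℕ → ℕ) : Sym2 ℕ → ℕ :=
  Sym2.lift ⟨fun a b => f a + f b, fun a b => Nat.add_comm _ _⟩

/-- Edge label for a positive edge: absolute difference of endpoint labels. -/
def posLabel (f : ℕ → ℕ) : Sym2 ℕ → ℕ :=
  Sym2.lift ⟨fun a b => max (f a) (f b) - min (f a) (f b),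
    fun a b => by simp only []; rw [max_comm, min_comm]⟩

/-- A (p,q)-graph with vertex finset `Vs` and edge finset `E` is additively graceful:
there is an injective `f : Vs → {0,…,⌈(q+1)/2⌉}` whose induced edge sums are
distinct and exactly `{1,…,q}`.  (Note `⌈(q+1)/2⌉ = (q+2)/2` in `ℕ`.) -/
def IsAddGracefulGraph (Vs : Finset ℕ) (E : Finset (Sym2 ℕ)) : Prop :=
  ∃ f : ℕ → ℕ, Set.InjOn f ↑Vs ∧ (∀ v ∈ Vs, f v ≤ (E.card + 2) / 2) ∧
    Set.InjOn (negLabel f) ↑E ∧ E.image (negLabel f) = Finset.Icc 1 E.card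

/-- A signed graph with vertex finset `Vs`, positive edges `P` (m := P.card) and
negative edges `N` (n := N.card) is additively graceful: there is an injective
`f : Vs → {0,…,m + ⌈(n+1)/2⌉}` with positive-edge labels `|f u - f v|` exactly
`{1,…,m}` and negative-edge labels `f u + f v` exactly `{1,…,n}`. -/
def IsAddGracefulSigned (Vs : Finset ℕ) (P N : Finset (Sym2 ℕ)) : Prop :=
  ∃ f : ℕ → ℕ, Set.InjOn f ↑Vs ∧
    (∀ v ∈ Vs, f v ≤ P.card + (N.card + 2) / 2) ∧
    Set.InjOn (posLabel f) ↑P ∧ P.image (posLabel f) = Finset.Icc 1 P.card ∧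
    Set.InjOn (negLabel f) ↑N ∧ N.image (negLabel f) = Finset.Icc 1 N.card

/-! The `p` vertex labels are distinct and lie in `{0, …, ⌊q/2⌋ + 1}`, so by pigeonhole
`p ≤ ⌊q/2⌋ + 2`. -/

theorem Finset.card_le_of_injOn_le {s : Finset ℕ} {f : ℕ → ℕ} {n : ℕ}
    (hf : ∀ a ∈ s, f a ≤ n) (hinj : Set.InjOn f s) : s.card ≤ n + 1 := by
  simpa using Finset.card_le_card_of_injOn f (t := Finset.Iic n)
    (fun a ha => Finset.mem_Iic.mpr (hf a ha)) hinj

theorem IsAddGracefulGraph.two_mul_card_le {Vs : Finset ℕ} {E : Finset (Sym2 ℕ)}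
    (h : IsAddGracefulGraph Vs E) : 2 * Vs.card ≤ E.card + 4 := by
  obtain ⟨f, hinj, hbd, -, -⟩ := h
  have hcard := Finset.card_le_of_injOn_le hbd hinj
  omega

theorem stmt_0_general (Vs : Finset ℕ) (E : Finset (Sym2 ℕ))
    (h : IsAddGracefulGraph Vs E) :
    (E.card : ℤ) ≥ 2 * (Vs.card : ℤ) - 4 := by
  have := h.two_mul_card_le
  omega

/-- If a simple graph with `p` vertices and `q ≥ 1` edges (no loops, all edges on
the vertex set) admits an additively graceful labeling, then `q ≥ 2p - 4`. -/
theorem stmt_0 (Vs : Finset ℕ) (E : Finset (Sym2 ℕ)) (hq : 1 ≤ E.card)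
    (hsub : ∀ e ∈ E, ∀ a ∈ e, a ∈ Vs) (hloop : ∀ e ∈ E, ¬ e.IsDiag)
    (h : IsAddGracefulGraph Vs E) :
    (E.card : ℤ) ≥ 2 * (Vs.card : ℤ) - 4 :=
  stmt_0_general Vs E h
end

section
/- The signed graph obtained from an all-negative path P3 = (u, v, w) by joining m ≥ 1 new pendant vertices to w by positive edges is an additively graceful signed graph. -/
open Finset

/-!
Label `u, v, w, p_i` (vertices `0, 1, 2, i + 2`) by `1, 0, 2, i + 2`, i.e. apply the
transposition of `0` and `1`. The negative edges `uv, vw` get `1, 2`, the pendant edges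
`w p_i` get `i`, and no vertex label exceeds `m + 2`.
-/

theorem posLabel_mk (f : ℕ → ℕ) (a b : ℕ) :
    posLabel f s(a, b) = max (f a) (f b) - min (f a) (f b) := rfl

theorem negLabel_mk (f : ℕ → ℕ) (a b : ℕ) : negLabel f s(a, b) = f a + f b := rfl

theorem injOn_of_image_eq_Icc {α : Type*} [DecidableEq α] {E : Finset α} {g : α → ℕ}
    (h : E.image g = Icc 1 E.card) : Set.InjOn g E :=
  Finset.card_image_iff.mp (by rw [h, Nat.card_Icc, Nat.add_sub_cancel])

theorem isAddGracefulSigned_of_image_eq {Vs : Finset ℕ} {P N : Finset (Sym2 ℕ)} (f : ℕ → ℕ)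
    (hinj : Set.InjOn f Vs) (hle : ∀ v ∈ Vs, f v ≤ P.card + (N.card + 2) / 2)
    (hP : P.image (posLabel f) = Icc 1 P.card) (hN : N.image (negLabel f) = Icc 1 N.card) :
    IsAddGracefulSigned Vs P N :=
  ⟨f, hinj, hle, injOn_of_image_eq_Icc hP, hP, injOn_of_image_eq_Icc hN, hN⟩

theorem card_star (c m : ℕ) : ((Icc (c + 1) (m + c)).image fun i => s(c, i)).card = m := by
  rw [card_image_of_injective _ fun _ _ h => Sym2.congr_right.mp h, Nat.card_Icc]
  omega

section Star

variable {f : ℕ → ℕ} {c : ℕ}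

theorem posLabel_star_of_fixed (hc : f c = c) {i : ℕ} (hi : f i = i) (hci : c ≤ i) :
    posLabel f s(c, i) = i - c := by
  rw [posLabel_mk, hc, hi, max_eq_right hci, min_eq_left hci]

theorem image_posLabel_star (m : ℕ) (hc : f c = c) (hleaf : ∀ i, c < i → f i = i) :
    ((Icc (c + 1) (m + c)).image fun i => s(c, i)).image (posLabel f) = Icc 1 m := by
  have hlabel : ∀ i, c < i → posLabel f s(c, i) = i - c := fun i hi =>
    posLabel_star_of_fixed hc (hleaf i hi) hi.le
  ext x
  simp only [image_image, mem_image, mem_Icc, Function.comp_apply]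
  constructor
  · rintro ⟨i, hi, rfl⟩
    rw [hlabel i (by omega)]
    omega
  · intro hx
    exact ⟨x + c, by omega, by rw [hlabel (x + c) (by omega), Nat.add_sub_cancel]⟩

end Star

theorem swap_zero_one_apply_le {v : ℕ} : Equiv.swap 0 1 v ≤ max v 1 := by
  rcases Nat.lt_or_ge v 2 with hv | hv
  · interval_cases v <;> simp
  · rw [Equiv.swap_apply_of_ne_of_ne (by omega) (by omega)]
    exact le_max_left v 1

theorem stmt_1_general (m : ℕ) :
    IsAddGracefulSigned (Finset.range (m + 3))
      ((Finset.Icc 3 (m + 2)).image fun i => s(2, i))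
      {s(0, 1), s(1, 2)} := by
  have hN : ({s(0, 1), s(1, 2)} : Finset (Sym2 ℕ)).card = 2 := by decide
  refine isAddGracefulSigned_of_image_eq (Equiv.swap 0 1) (Equiv.injective _).injOn ?_ ?_ ?_
  · intro v hv
    rw [card_star 2 m, hN]
    have hv_lt : v < m + 3 := mem_range.mp hv
    have hfv : Equiv.swap 0 1 v ≤ max v 1 := swap_zero_one_apply_le
    omega
  · rw [card_star 2 m]
    exact image_posLabel_star m rfl fun i hi =>
      Equiv.swap_apply_of_ne_of_ne (by omega) (by omega)
  · rw [hN, image_insert, image_singleton, negLabel_mk, negLabel_mk]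
    decide

/-- The signed graph from an all-negative `P₃ = (0,1,2)` with `m ≥ 1` pendant
vertices `3,…,m+2` joined to `2` by positive edges is additively graceful. -/
theorem stmt_1 (m : ℕ) (hm : 1 ≤ m) :
    IsAddGracefulSigned (Finset.range (m + 3))
      ((Finset.Icc 3 (m + 2)).image fun i => s(2, i))
      {s(0, 1), s(1, 2)} :=
  stmt_1_general m
end

section
/- The signed bistar B(m,1), obtained from a positive edge uv by attaching m − 1 pendant vertices to u by positive edges and one pendant vertex w to v by a negative edge, admits an additively graceful labeling. -/
open Finset

/-! With `f(u) = m + 1`, the pendant edge `uw_j` gets label `j` and `uv` gets label `m`, so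
the positive labels cover `{1, …, m}`; as there are at most `m` positive edges, they are
then automatically distinct. The negative edge `vw` gets `1 + 0 = 1`. -/

theorem Finset.injOn_and_card_eq_of_image_eq_Icc {α : Type*} [DecidableEq α] {s : Finset α}
    {g : α → ℕ} {k : ℕ} (himage : s.image g = Icc 1 k) (hcard : s.card ≤ k) :
    Set.InjOn g s ∧ s.card = k := by
  have hk : (s.image g).card = k := by rw [himage, Nat.card_Icc, Nat.add_sub_cancel]
  have hle := s.card_image_le (f := g)
  exact ⟨Finset.card_image_iff.mp (by omega), by omega⟩

theorem posLabel_mk_of_le {f : ℕ → ℕ} {a b : ℕ} (h : f b ≤ f a) :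
    posLabel f s(a, b) = f a - f b := by
  simp [posLabel, h]

/-- The vertices `u, v, w, w_j` are numbered `0, 1, 2, j + 2`. -/
def bistarLabel (m : ℕ) : ℕ → ℕ
  | 0 => m + 1
  | 1 => 1
  | 2 => 0
  | i + 3 => m - i

def bistarPosEdges (m : ℕ) : Finset (Sym2 ℕ) :=
  insert s(0, 1) ((Icc 3 (m + 1)).image fun i => s(0, i))

section Bistar

variable {m : ℕ}

theorem bistarLabel_injOn (hm : 1 ≤ m) : Set.InjOn (bistarLabel m) (range (m + 2)) := by
  intro a ha b hb h
  simp only [coe_range, Set.mem_Iio] at ha hb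
  rcases a with _ | _ | _ | a <;> rcases b with _ | _ | _ | b <;>
    simp only [bistarLabel] at h <;> omega

theorem bistarLabel_le (v : ℕ) : bistarLabel m v ≤ m + 1 := by
  rcases v with _ | _ | _ | v <;> simp only [bistarLabel] <;> omega

theorem posLabel_bistarLabel_pendant {i : ℕ} (hi : i ∈ Icc 3 (m + 1)) :
    posLabel (bistarLabel m) s(0, i) = i - 2 := by
  simp only [mem_Icc] at hi
  obtain ⟨i, rfl⟩ : ∃ j, i = j + 3 := ⟨i - 3, by omega⟩
  rw [posLabel_mk_of_le (by simp only [bistarLabel]; omega)]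
  simp only [bistarLabel]
  omega

theorem image_posLabel_bistarPosEdges (hm : 1 ≤ m) :
    (bistarPosEdges m).image (posLabel (bistarLabel m)) = Icc 1 m := by
  have hcenter : posLabel (bistarLabel m) s(0, 1) = m := by
    rw [posLabel_mk_of_le (by simp only [bistarLabel]; omega)]
    simp only [bistarLabel]
    omega
  have hpendants : (Icc 3 (m + 1)).image (fun i => posLabel (bistarLabel m) s(0, i)) =
      Icc 1 (m - 1) := by
    rw [image_congr fun i hi => posLabel_bistarLabel_pendant hi]
    ext x
    simp only [mem_image, mem_Icc]
    exact ⟨by rintro ⟨i, hi, rfl⟩; omega, fun hx => ⟨x + 2, by omega, by omega⟩⟩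
  rw [bistarPosEdges, image_insert, image_image, Function.comp_def, hcenter, hpendants]
  ext x
  simp only [mem_insert, mem_Icc]
  omega

theorem card_bistarPosEdges_le (hm : 1 ≤ m) : (bistarPosEdges m).card ≤ m := by
  calc (bistarPosEdges m).card
      ≤ ((Icc 3 (m + 1)).image fun i => s(0, i)).card + 1 := card_insert_le _ _
    _ ≤ (Icc 3 (m + 1)).card + 1 := by grw [card_image_le]
    _ = m := by rw [Nat.card_Icc]; omega

end Bistar

/-- The signed bistar `B(m,1)`: positive edge `uv` (u = 0, v = 1), `m - 1`
positive pendant edges at `u` (to `3,…,m+1`), and one negative edge `vw`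
(w = 2), admits an additively graceful labeling. -/
theorem stmt_5 (m : ℕ) (hm : 1 ≤ m) :
    IsAddGracefulSigned (Finset.range (m + 2))
      (insert s(0, 1) ((Finset.Icc 3 (m + 1)).image fun i => s(0, i)))
      {s(1, 2)} := by
  change IsAddGracefulSigned _ (bistarPosEdges m) _
  obtain ⟨hinj, hcard⟩ := injOn_and_card_eq_of_image_eq_Icc
    (image_posLabel_bistarPosEdges hm) (card_bistarPosEdges_le hm)
  refine ⟨bistarLabel m, bistarLabel_injOn hm, fun v _ => ?_, hinj, ?_, by simp, by rfl⟩
  · simpa [hcard] using bistarLabel_le v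
  · rw [hcard, image_posLabel_bistarPosEdges hm]
end

section
/- The signed graph STE, obtained from a triangle K_3 on vertices u, v, w with exactly one negative edge uw (edges uv and vw positive) by joining m ≥ 1 new pendant vertices to w by positive edges, admits an additively graceful labeling. -/
open Finset

theorem Finset.image_image_of_leftInvOn {α β : Type*} [DecidableEq α] [DecidableEq β]
    {s : Finset α} {e : α → β} {g : β → α} (h : Set.LeftInvOn g e s) :
    (s.image e).image g = s :=
  Finset.coe_injective (by push_cast; exact h.image_image)

theorem Finset.injOn_image_of_leftInvOn {α β : Type*} [DecidableEq β]
    {s : Finset α} {e : α → β} {g : β → α} (h : Set.LeftInvOn g e s) :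
    Set.InjOn g ↑(s.image e) := by
  rw [Finset.coe_image]
  exact h.rightInvOn_image.injOn

/-- The labeling `f(u) = 1`, `f(v) = 2`, `f(w) = 0`, `f(wᵢ) = i + 2`, with `u, v, w, wᵢ`
numbered `0, 1, 2, i + 2`, so that it is the identity on the pendant vertices. -/
def steLabel (i : ℕ) : ℕ :=
  if i = 0 then 1 else if i = 1 then 2 else if i = 2 then 0 else i

/-- The positive edge of `STE` that receives the label `k` under `steLabel`. Listing the
positive edges by their labels gives their number and their label set at once. -/
def steEdge (k : ℕ) : Sym2 ℕ :=
  if k = 1 then s(0, 1) else if k = 2 then s(1, 2) else s(2, k)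

theorem steLabel_injective : Function.Injective steLabel := by
  intro a b h
  unfold steLabel at h
  split_ifs at h <;> omega

theorem steLabel_le (i : ℕ) : steLabel i ≤ max i 2 := by
  unfold steLabel
  split_ifs <;> omega

theorem posLabel_steLabel_steEdge {k : ℕ} (hk : 1 ≤ k) : posLabel steLabel (steEdge k) = k := by
  unfold steEdge
  split_ifs with h1 h2
  · simp [posLabel, steLabel, h1]
  · simp [posLabel, steLabel, h2]
  · simp [posLabel, steLabel, h1, h2, show k ≠ 0 by omega]

theorem image_steEdge_Icc (m : ℕ) :
    (Icc 1 (m + 2)).image steEdge =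
      insert s(0, 1) (insert s(1, 2) ((Icc 3 (m + 2)).image fun i => s(2, i))) := by
  have hIcc : Icc 1 (m + 2) = insert 1 (insert 2 (Icc 3 (m + 2))) := by
    ext; simp only [mem_insert, mem_Icc]; omega
  rw [hIcc, image_insert, image_insert]
  congr 2
  exact image_congr fun i hi => by
    simp only [coe_Icc, Set.mem_Icc] at hi
    rw [steEdge, if_neg (by omega), if_neg (by omega)]

theorem stmt_7_general (m : ℕ) :
    IsAddGracefulSigned (Finset.range (m + 3))
      (insert s(0, 1) (insert s(1, 2) ((Finset.Icc 3 (m + 2)).image fun i => s(2, i))))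
      {s(0, 2)} := by
  have hinv : Set.LeftInvOn (posLabel steLabel) steEdge ↑(Icc 1 (m + 2)) :=
    fun k hk => posLabel_steLabel_steEdge (mem_Icc.mp hk).1
  have hcard : #((Icc 1 (m + 2)).image steEdge) = m + 2 := by
    rw [card_image_of_injOn hinv.injOn, Nat.card_Icc]
    omega
  rw [← image_steEdge_Icc]
  refine ⟨steLabel, steLabel_injective.injOn, fun v hv => ?_,
    injOn_image_of_leftInvOn hinv, ?_, by simp, by simp [negLabel, steLabel]⟩
  · rw [mem_range] at hv
    rw [hcard, card_singleton]
    exact (steLabel_le v).trans (by omega)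
  · rw [hcard, image_image_of_leftInvOn hinv]

/-- `STE`: a triangle on `u = 0, v = 1, w = 2` with one negative edge `uw`,
positive edges `uv`, `vw`, and `m ≥ 1` positive pendant edges at `w`
(to `3,…,m+2`), admits an additively graceful labeling. -/
theorem stmt_7 (m : ℕ) (hm : 1 ≤ m) :
    IsAddGracefulSigned (Finset.range (m + 3))
      (insert s(0, 1) (insert s(1, 2) ((Finset.Icc 3 (m + 2)).image fun i => s(2, i))))
      {s(0, 2)} :=
  stmt_7_general m
end
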